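/- The inference relation induced by regular AA-CBR_⪰ is not cautiously monotonic: there exist a set X of characterisations with partial order, a coherent casebase D, and characterisations N_1, N_2 such that D ⊢ (N_1,+), D ⊢ (N_2,−), but D ∪ {(N_1,+)} ⊢ (N_2,+). -/
import Mathlib


namespace AACBR

/-- In an AF with arguments `args` and attack `att`, a set `E` defends argument `a`
iff every attacker of `a` (within `args`) is attacked by some element of `E`. -/
def defends {A : Type} (args : Set A) (att : A → A → Prop) (E : Set A) (a : A) : Prop :=
  ∀ b ∈ args, att b a → ∃ c ∈ E, att c b

/-- `G_0` is the set of unattacked arguments; `G_{i+1}` is the set of arguments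
defended by `G_i`. -/
def groundedSeq {A : Type} (args : Set A) (att : A → A → Prop) : ℕ → Set A
  | 0 => {a ∈ args | ∀ b ∈ args, ¬ att b a}
  | n + 1 => {a ∈ args | defends args att (groundedSeq args att n) a}

/-- The grounded extension `⋃ i, G_i`. -/
def grounded {A : Type} (args : Set A) (att : A → A → Prop) : Set A :=
  ⋃ i, groundedSeq args att i

variable {X : Type}

/-- Cases are pairs of a characterisation (in the partially ordered set `X`, where
`α ≤ β` reads "`α` is less specific than `β`") and one of the two outcomes
(modelled as `Bool`). Attack between labelled cases of the casebase `cb`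
(which includes the default argument): `a` attacks `b` iff their outcomes differ,
`a` is at least as specific as `b`, and no case of `cb` with the same outcome as
`a` is strictly in between. -/
def cbAtt [PartialOrder X] (cb : Set (X × Bool)) (a b : X × Bool) : Prop :=
  a ∈ cb ∧ b ∈ cb ∧ a.2 ≠ b.2 ∧ b.1 ≤ a.1 ∧
    ¬ ∃ g ∈ cb, g.2 = a.2 ∧ b.1 < g.1 ∧ g.1 < a.1

/-- The arguments of the AF mined from casebase `D`, default argument `(dC, dO)`
and a new case: `none` is the new-case argument, `some c` the labelled cases. -/
def minedArgs (D : Set (X × Bool)) (dC : X) (dO : Bool) : Set (Option (X × Bool)) :=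
  insert none (Option.some '' insert (dC, dO) D)

/-- The attack relation of the (regular) AF mined from `D`, default `(dC, dO)` and
new case `N`: labelled cases attack each other as in `cbAtt`, and the new-case
argument attacks exactly the labelled cases `b` that are irrelevant to it,
i.e. with `¬ b.1 ≤ N`. -/
def minedAtt [PartialOrder X] (D : Set (X × Bool)) (dC : X) (dO : Bool) (N : X) :
    Option (X × Bool) → Option (X × Bool) → Prop
  | some a, some b => cbAtt (insert (dC, dO) D) a b
  | none, some b => b ∈ insert (dC, dO) D ∧ ¬ b.1 ≤ N
  | _, none => False

/-- The grounded extension of the AF mined from `D` and new case `N`. -/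
def minedGrounded [PartialOrder X] (D : Set (X × Bool)) (dC : X) (dO : Bool) (N : X) :
    Set (Option (X × Bool)) :=
  grounded (minedArgs D dC dO) (minedAtt D dC dO N)

open Classical in
/-- The AA-CBR_⪰ prediction for `N`: the default outcome `dO` if the default
argument is in the grounded extension, and the other outcome otherwise. -/
noncomputable def predict [PartialOrder X] (D : Set (X × Bool)) (dC : X) (dO : Bool)
    (N : X) : Bool :=
  if some (dC, dO) ∈ minedGrounded D dC dO N then dO else !dO

/-- A casebase is coherent if no characterisation occurs with two outcomes. -/
def coherent (D : Set (X × Bool)) : Prop :=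
  ∀ a ∈ D, ∀ b ∈ D, a.1 = b.1 → a.2 = b.2

/-- A case `a ∈ D` is nearest to `N` iff `a.1 ⪯ N`, maximally so. -/
def nearest [PartialOrder X] (D : Set (X × Bool)) (N : X) (a : X × Bool) : Prop :=
  a ∈ D ∧ a.1 ≤ N ∧ ¬ ∃ b ∈ D, a.1 < b.1 ∧ b.1 ≤ N

end AACBR

namespace AACBR



-- ------------------------------------------------------------------
-- Auxiliary machinery
-- ------------------------------------------------------------------

section Aux
variable {A : Type} (args : Set A) (att : A → A → Prop)

lemma seq_mono : ∀ n, groundedSeq args att n ⊆ groundedSeq args att (n+1) := by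
  intro n
  induction n with
  | zero =>
      rintro a ⟨ha, h⟩
      exact ⟨ha, fun b hb hatt => absurd hatt (h b hb)⟩
  | succ n ih =>
      rintro a ⟨ha, h⟩
      refine ⟨ha, fun b hb hatt => ?_⟩
      obtain ⟨c, hc, hcb⟩ := h b hb hatt
      exact ⟨c, ih hc, hcb⟩

lemma seq_monotone : Monotone (groundedSeq args att) :=
  monotone_nat_of_le_succ (seq_mono args att)

lemma seq_stab {n : ℕ}
    (h : groundedSeq args att (n+1) = groundedSeq args att n) :
    ∀ m, n ≤ m → groundedSeq args att m = groundedSeq args att n := by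
  intro m hm
  induction m, hm using Nat.le_induction with
  | base => rfl
  | succ m hm ih =>
      have hdef : groundedSeq args att (m+1)
          = {a ∈ args | defends args att (groundedSeq args att m) a} := rfl
      rw [hdef, ih]
      exact h

lemma grounded_eq {n : ℕ}
    (h : groundedSeq args att (n+1) = groundedSeq args att n) :
    grounded args att = groundedSeq args att n := by
  apply Set.Subset.antisymm
  · intro x hx
    obtain ⟨i, hi⟩ := Set.mem_iUnion.mp hx
    rcases le_total i n with hle | hle
    · exact seq_monotone args att hle hi
    · rwa [seq_stab args att h i hle] at hi
  · intro x hx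
    exact Set.mem_iUnion.mpr ⟨n, hx⟩

end Aux

section FinsetVersion
variable {A : Type} [DecidableEq A] (argsF : Finset A) (attF : A → A → Bool)

def gseqF : ℕ → Finset A
  | 0 => argsF.filter fun a => ∀ b ∈ argsF, ¬ attF b a
  | n+1 => argsF.filter fun a => ∀ b ∈ argsF, attF b a → ∃ c ∈ gseqF n, attF c b

set_option linter.unusedSectionVars false in
lemma gseqF_correct (args : Set A) (att : A → A → Prop)
    (h1 : args = ↑argsF) (h2 : ∀ a b, att a b ↔ attF a b = true) :
    ∀ n, groundedSeq args att n = ↑(gseqF argsF attF n) := by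
  subst h1
  intro n
  induction n with
  | zero =>
      ext a
      simp [groundedSeq, gseqF, h2]
  | succ n ih =>
      ext a
      simp [groundedSeq, gseqF, defends, h2, ih]

end FinsetVersion

abbrev X4 := Finset (Fin 4)
abbrev P4 := X4 × Bool

def mAttF (cbF : Finset P4) (N : X4) : Option P4 → Option P4 → Bool
  | some a, some b =>
      decide (a ∈ cbF ∧ b ∈ cbF ∧ a.2 ≠ b.2 ∧ b.1 ≤ a.1 ∧
        ¬ ∃ g ∈ cbF, g.2 = a.2 ∧ b.1 < g.1 ∧ g.1 < a.1)
  | none, some b => decide (b ∈ cbF ∧ ¬ b.1 ≤ N)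
  | _, none => false

lemma mAtt_iff (D : Set P4) (dC : X4) (dO : Bool) (cbF : Finset P4)
    (hcb : ∀ x : P4, x ∈ (insert (dC, dO) D : Set P4) ↔ x ∈ cbF) (N : X4) :
    ∀ a b, minedAtt D dC dO N a b ↔ mAttF cbF N a b = true := by
  intro a b
  cases a <;> cases b <;> simp [minedAtt, mAttF, cbAtt, hcb]

lemma mArgs_eq (D : Set P4) (dC : X4) (dO : Bool) (cbF : Finset P4)
    (hcb : ∀ x : P4, x ∈ (insert (dC, dO) D : Set P4) ↔ x ∈ cbF) :
    minedArgs D dC dO = ↑(insert (none : Option P4) (cbF.image some)) := by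
  ext x
  cases x <;> simp [minedArgs, hcb]

def D0 : Set P4 := {({0}, true), ({2}, true), ({0,1}, false), ({2,3}, false)}

def cbF0 : Finset P4 := {(∅, false), ({0}, true), ({2}, true), ({0,1}, false), ({2,3}, false)}

def cbF1 : Finset P4 :=
  {(∅, false), ({0,1,2}, true), ({0}, true), ({2}, true), ({0,1}, false), ({2,3}, false)}

lemma hcb0 : ∀ x : P4, x ∈ (insert ((∅ : X4), false) D0 : Set P4) ↔ x ∈ cbF0 := by
  intro x
  simp [D0, cbF0]

lemma hcb1 : ∀ x : P4,
    x ∈ (insert ((∅ : X4), false) (insert (({0,1,2} : X4), true) D0) : Set P4) ↔ x ∈ cbF1 := by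
  intro x
  simp [D0, cbF1]

lemma mg (D : Set P4) (cbF : Finset P4)
    (hcb : ∀ x : P4, x ∈ (insert ((∅ : X4), false) D : Set P4) ↔ x ∈ cbF)
    (N : X4) (n : ℕ)
    (hstab : gseqF (insert (none : Option P4) (cbF.image some)) (mAttF cbF N) (n+1)
           = gseqF (insert (none : Option P4) (cbF.image some)) (mAttF cbF N) n) :
    minedGrounded D ∅ false N
      = ↑(gseqF (insert (none : Option P4) (cbF.image some)) (mAttF cbF N) n) := by
  have hc := gseqF_correct (insert (none : Option P4) (cbF.image some)) (mAttF cbF N)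
    (minedArgs D ∅ false) (minedAtt D ∅ false N) (mArgs_eq D ∅ false cbF hcb)
    (mAtt_iff D ∅ false cbF hcb N)
  have h : groundedSeq (minedArgs D ∅ false) (minedAtt D ∅ false N) (n+1)
      = groundedSeq (minedArgs D ∅ false) (minedAtt D ∅ false N) n := by
    rw [hc, hc, hstab]
  rw [minedGrounded, grounded_eq _ _ h, hc]


/-- The inference relation induced by regular AA-CBR_⪰ is not cautiously
monotonic: there exist a partially ordered set of characterisations `X`, a
coherent (finite) casebase `D` with a least default characterisation `dC` (with
default outcome `-`, i.e. `false`), and characterisations `N₁, N₂` such that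
`D ⊢ (N₁,+)`, `D ⊢ (N₂,−)`, but `D ∪ {(N₁,+)} ⊢ (N₂,+)`. -/
theorem not_cautiously_monotonic :
    ∃ (X : Type) (inst : PartialOrder X) (D : Set (X × Bool)) (dC N₁ N₂ : X),
      D.Finite ∧ coherent D ∧ (∀ x : X, @LE.le X inst.toLE dC x) ∧
      @predict X inst D dC false N₁ = true ∧
      @predict X inst D dC false N₂ = false ∧
      @predict X inst (insert (N₁, true) D) dC false N₂ = true := by
  refine ⟨X4, inferInstance, D0, ∅, {0,1,2}, {0,1,2,3}, ?_, ?_, ?_, ?_, ?_, ?_⟩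
  · apply Set.toFinite
  · rintro ⟨x1, x2⟩ hx ⟨y1, y2⟩ hy h
    simp only [D0, Set.mem_insert_iff, Set.mem_singleton_iff, Prod.mk.injEq] at hx hy
    rcases hx with ⟨rfl, rfl⟩ | ⟨rfl, rfl⟩ | ⟨rfl, rfl⟩ | ⟨rfl, rfl⟩ <;>
      rcases hy with ⟨rfl, rfl⟩ | ⟨rfl, rfl⟩ | ⟨rfl, rfl⟩ | ⟨rfl, rfl⟩ <;>
      revert h <;> decide
  · exact fun x => Finset.empty_subset x
  · have hm : some (((∅ : X4), false)) ∉ minedGrounded D0 ∅ false {0,1,2} := by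
      rw [mg D0 cbF0 hcb0 {0,1,2} 2 (by decide)]
      simp only [Finset.mem_coe]
      decide
    rw [predict, if_neg hm]; rfl
  · have hm : some (((∅ : X4), false)) ∈ minedGrounded D0 ∅ false {0,1,2,3} := by
      rw [mg D0 cbF0 hcb0 {0,1,2,3} 2 (by decide)]
      simp only [Finset.mem_coe]
      decide
    rw [predict, if_pos hm]
  · have hm : some (((∅ : X4), false))
        ∉ minedGrounded (insert (({0,1,2} : X4), true) D0) ∅ false {0,1,2,3} := by
      rw [mg (insert (({0,1,2} : X4), true) D0) cbF1 hcb1 {0,1,2,3} 2 (by decide)]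
      simp only [Finset.mem_coe]
      decide
    rw [predict, if_neg hm]; rfl


end AACBR
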